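/- For every atom p, the weak excluded middle formula ¬p ∨ ¬¬p is E*-valid, where E* is the ruleset E with rule D10 replaced by rule D10*: Proponent may assert an atom p only if Opponent has asserted p or ¬p before. -/

import Mathlib

/- Formalization of Lorenzen dialogue games, following Felscher's presentation.

   Propositional formulas are built from atoms using ¬, ∧, ∨, →.  A dialogue
   for a formula φ is a sequence of moves beginning with Proponent (P)
   asserting φ at position 0, with O moving at odd positions and P at even
   positions.  Each later move attacks or defends an earlier move of the other
   player, according to the particle rules.  Structural rules (D10, D11, D12,
   D13, E, and the variants D10*, D10′) constrain dialogues further.  P wins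
   if P made the last move and no moves are available to O; φ is S-valid if P
   has an S-winning strategy for φ. -/

namespace LorenzenDialogues

/-- Propositional formulas: atoms, ¬, ∧, ∨, →. -/
inductive Formula : Type
  | atom : ℕ → Formula
  | neg  : Formula → Formula
  | and  : Formula → Formula → Formula
  | or   : Formula → Formula → Formula
  | imp  : Formula → Formula → Formula
deriving DecidableEq

/-- Statements: formulas together with the symbolic attacks `?`, `∧_L`, `∧_R`. -/
inductive Statement : Type
  | form  : Formula → Statement
  | qmark : Statement
  | andL  : Statement
  | andR  : Statement
deriving DecidableEq

/-- Particle rules, attack part: which statements attack which formulas. -/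
inductive Attacks : Statement → Formula → Prop
  | andL (a b : Formula) : Attacks .andL (.and a b)
  | andR (a b : Formula) : Attacks .andR (.and a b)
  | qmark (a b : Formula) : Attacks .qmark (.or a b)
  | imp (a b : Formula) : Attacks (.form a) (.imp a b)
  | neg (a : Formula) : Attacks (.form a) (.neg a)

/-- Particle rules, defense part: `Defends χ a s` means `s` is a permitted
    defense of the formula `χ` against the attack `a`.  (A negation admits
    no defense.) -/
inductive Defends : Formula → Statement → Statement → Prop
  | andL (a b : Formula) : Defends (.and a b) .andL (.form a)
  | andR (a b : Formula) : Defends (.and a b) .andR (.form b)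
  | orL (a b : Formula) : Defends (.or a b) .qmark (.form a)
  | orR (a b : Formula) : Defends (.or a b) .qmark (.form b)
  | imp (a b : Formula) : Defends (.imp a b) (.form a) (.form b)

/-- A move: a statement, a flag recording whether it is an attack (`true`)
    or a defense (`false`), and the position of the earlier move it attacks,
    resp. the earlier attack it defends against. -/
structure Move : Type where
  statement : Statement
  isAttack : Bool
  ref : ℕ
deriving DecidableEq

/-- A dialogue: the initial formula asserted by P at position 0, followed by
    the list of later moves (the move at list index `i` occupies position
    `i + 1`; O moves at odd positions, P at even positions). -/
structure Dialogue : Type where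
  initial : Formula
  moves : List Move

/-- The statement asserted at position `n` (if any). -/
def Dialogue.stmtAt (d : Dialogue) (n : ℕ) : Option Statement :=
  if n = 0 then some (.form d.initial) else (d.moves[n - 1]?).map Move.statement

/-- The move at position `n ≥ 1` (if any); position 0 is the initial assertion,
    not a move. -/
def Dialogue.moveAt (d : Dialogue) (n : ℕ) : Option Move :=
  if n = 0 then none else d.moves[n - 1]?

/-- The move `m`, played at position `n ≥ 1`, is permitted by the particle
    rules: it refers to an earlier position of the other player; if it is an
    attack, it attacks a formula asserted there, and if it is a defense, it
    responds to an attack played there, as the particle rules prescribe. -/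
def MoveOK (d : Dialogue) (n : ℕ) (m : Move) : Prop :=
  m.ref < n ∧ m.ref % 2 ≠ n % 2 ∧
    (m.isAttack = true →
      ∃ ψ, d.stmtAt m.ref = some (.form ψ) ∧ Attacks m.statement ψ) ∧
    (m.isAttack = false →
      ∃ a χ, d.moveAt m.ref = some a ∧ a.isAttack = true ∧
        d.stmtAt a.ref = some (.form χ) ∧ Defends χ a.statement m.statement)

/-- The dialogue adheres to the particle rules (every move is legal). -/
def ParticleOK (d : Dialogue) : Prop :=
  ∀ i m, d.moves[i]? = some m → MoveOK d (i + 1) m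

/-- Position `n` carries a defense of the attack made at position `r`. -/
def IsDefenseOf (d : Dialogue) (n r : ℕ) : Prop :=
  ∃ m, d.moveAt n = some m ∧ m.isAttack = false ∧ m.ref = r

/-- Position `n` carries an attack on the assertion made at position `r`. -/
def IsAttackOn (d : Dialogue) (n r : ℕ) : Prop :=
  ∃ m, d.moveAt n = some m ∧ m.isAttack = true ∧ m.ref = r

/-- Position `n` carries an attack. -/
def IsAttackPos (d : Dialogue) (n : ℕ) : Prop :=
  ∃ m, d.moveAt n = some m ∧ m.isAttack = true

/-- The attack at position `r` is still open (no defense against it has yet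
    been played) before position `k`. -/
def OpenAt (d : Dialogue) (r k : ℕ) : Prop :=
  IsAttackPos d r ∧ ¬ ∃ j, j < k ∧ IsDefenseOf d j r

/-- (D10) P may assert an atomic formula only after it has been asserted by O
    before. -/
def D10 (d : Dialogue) : Prop :=
  ∀ n p, n % 2 = 0 → d.stmtAt n = some (.form (.atom p)) →
    ∃ j, j < n ∧ j % 2 = 1 ∧ d.stmtAt j = some (.form (.atom p))

/-- (D10*) P may assert an atom `p` only if O has asserted `p` or `¬p`
    before. -/
def D10star (d : Dialogue) : Prop :=
  ∀ n p, n % 2 = 0 → d.stmtAt n = some (.form (.atom p)) →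
    ∃ j, j < n ∧ j % 2 = 1 ∧
      (d.stmtAt j = some (.form (.atom p)) ∨
        d.stmtAt j = some (.form (.neg (.atom p))))

/-- (D10′) P may assert an atom `p` only if O has asserted `p` or `¬¬p`
    before. -/
def D10prime (d : Dialogue) : Prop :=
  ∀ n p, n % 2 = 0 → d.stmtAt n = some (.form (.atom p)) →
    ∃ j, j < n ∧ j % 2 = 1 ∧
      (d.stmtAt j = some (.form (.atom p)) ∨
        d.stmtAt j = some (.form (.neg (.neg (.atom p)))))

/-- (D11) When defending, only the most recent open attack may be responded
    to: the attack defended against is open, and no strictly more recent open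
    attack (against the same player) exists. -/
def D11 (d : Dialogue) : Prop :=
  ∀ n r, IsDefenseOf d n r →
    OpenAt d r n ∧ ¬ ∃ r', r < r' ∧ r' < n ∧ r' % 2 = r % 2 ∧ OpenAt d r' n

/-- (D12) An attack may be answered at most once. -/
def D12 (d : Dialogue) : Prop :=
  ∀ n₁ n₂ r, IsDefenseOf d n₁ r → IsDefenseOf d n₂ r → n₁ = n₂

/-- (D13) A P-assertion (made at an even position) may be attacked at most
    once. -/
def D13 (d : Dialogue) : Prop :=
  ∀ n₁ n₂ r, r % 2 = 0 → IsAttackOn d n₁ r → IsAttackOn d n₂ r → n₁ = n₂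

/-- (E) O can react only upon the immediately preceding P-statement. -/
def ERule (d : Dialogue) : Prop :=
  ∀ n m, n % 2 = 1 → d.moveAt n = some m → m.ref = n - 1

/-- A ruleset is a set of structural rules, i.e. a predicate on dialogues. -/
def Ruleset := Dialogue → Prop

/-- Ruleset D = {D10, D11, D12, D13}. -/
def rulesetD : Ruleset := fun d => D10 d ∧ D11 d ∧ D12 d ∧ D13 d

/-- Ruleset E = D ∪ {E}. -/
def rulesetE : Ruleset := fun d => rulesetD d ∧ ERule d

/-- Ruleset CL = E − {D11, D12} = {D10, D13, E}. -/
def rulesetCL : Ruleset := fun d => D10 d ∧ D13 d ∧ ERule d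

/-- Ruleset N = D − {D11, D12} = {D10, D13}. -/
def rulesetN : Ruleset := fun d => D10 d ∧ D13 d

/-- Ruleset E* = {D10*, D11, D12, D13, E}. -/
def rulesetEstar : Ruleset :=
  fun d => D10star d ∧ D11 d ∧ D12 d ∧ D13 d ∧ ERule d

/-- Ruleset E′ = {D10′, D11, D12, D13, E}. -/
def rulesetEprime : Ruleset :=
  fun d => D10prime d ∧ D11 d ∧ D12 d ∧ D13 d ∧ ERule d

/-- An S-dialogue: a dialogue adhering to the particle rules and to the
    structural rules S. -/
def Legal (S : Ruleset) (d : Dialogue) : Prop := ParticleOK d ∧ S d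

/-- Extend a dialogue by one move. -/
def Dialogue.extend (d : Dialogue) (m : Move) : Dialogue :=
  ⟨d.initial, d.moves ++ [m]⟩

/-- The position about to be played. -/
def nextPos (d : Dialogue) : ℕ := d.moves.length + 1

/-- It is P's turn (the next position is even). -/
def PTurn (d : Dialogue) : Prop := nextPos d % 2 = 0

/-- The move `m` legally extends the S-dialogue `d`. -/
def LegalExt (S : Ruleset) (d : Dialogue) (m : Move) : Prop :=
  Legal S (d.extend m)

/-- `PWinningC S C d` holds when P, moving under the additional constraint
    `C` on P's own choices, has a winning strategy in the S-dialogue game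
    continuing the dialogue `d`: at P's turn, P has a legal move (satisfying
    `C`) after which P is still winning; at O's turn, every legal O-move
    leads to a position where P is winning (in particular, if no O-move is
    available, P has won: P made the last move and O cannot move). -/
inductive PWinningC (S : Ruleset) (C : Dialogue → Move → Prop) : Dialogue → Prop
  | pMove (d : Dialogue) (m : Move) (hturn : PTurn d)
      (hm : LegalExt S d m) (hC : C d m)
      (h : PWinningC S C (d.extend m)) : PWinningC S C d
  | oMoves (d : Dialogue) (hturn : ¬ PTurn d)
      (h : ∀ m, LegalExt S d m → PWinningC S C (d.extend m)) :
      PWinningC S C d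

/-- P has a winning strategy continuing the S-dialogue `d`. -/
def PWinning (S : Ruleset) (d : Dialogue) : Prop :=
  PWinningC S (fun _ _ => True) d

/-- `valid S φ` (written `⊨_S φ`): the opening assertion of φ is itself a
    legal S-dialogue and P has an S-winning strategy for φ. -/
def valid (S : Ruleset) (φ : Formula) : Prop :=
  Legal S ⟨φ, []⟩ ∧ PWinning S ⟨φ, []⟩

/-- Derivability in intuitionistic propositional logic (a Hilbert-style
    axiomatization with modus ponens). -/
inductive IProv : Formula → Prop
  | k (a b : Formula) : IProv (.imp a (.imp b a))
  | s (a b c : Formula) :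
      IProv (.imp (.imp a (.imp b c)) (.imp (.imp a b) (.imp a c)))
  | andE1 (a b : Formula) : IProv (.imp (.and a b) a)
  | andE2 (a b : Formula) : IProv (.imp (.and a b) b)
  | andI (a b : Formula) : IProv (.imp a (.imp b (.and a b)))
  | orI1 (a b : Formula) : IProv (.imp a (.or a b))
  | orI2 (a b : Formula) : IProv (.imp b (.or a b))
  | orE (a b c : Formula) :
      IProv (.imp (.imp a c) (.imp (.imp b c) (.imp (.or a b) c)))
  | negI (a b : Formula) :
      IProv (.imp (.imp a b) (.imp (.imp a (.neg b)) (.neg a)))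
  | negE (a b : Formula) : IProv (.imp (.neg a) (.imp a b))
  | mp (a b : Formula) : IProv (.imp a b) → IProv a → IProv b

/-- The stability principle ¬¬p → p for the atom `p`. -/
def stab (p : ℕ) : Formula := .imp (.neg (.neg (.atom p))) (.atom p)

/-- Stable logic: intuitionistic propositional logic plus all instances of
    the stability scheme ¬¬p → p for atoms p, closed under modus ponens. -/
inductive StableProv : Formula → Prop
  | intuit (a : Formula) : IProv a → StableProv a
  | stab (p : ℕ) : StableProv (stab p)
  | mp (a b : Formula) : StableProv (.imp a b) → StableProv a → StableProv b

/-- Boolean evaluation of a formula under a valuation of its atoms. -/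
def Formula.eval (v : ℕ → Bool) : Formula → Bool
  | .atom p => v p
  | .neg a => !(a.eval v)
  | .and a b => a.eval v && b.eval v
  | .or a b => a.eval v || b.eval v
  | .imp a b => !(a.eval v) || b.eval v

/-- A classical tautology: true under every Boolean valuation. -/
def Tautology (φ : Formula) : Prop := ∀ v, φ.eval v = true

/-- Uniform substitution of formulas for atoms, applied homomorphically. -/
def Formula.subst (σ : ℕ → Formula) : Formula → Formula
  | .atom p => σ p
  | .neg a => .neg (a.subst σ)
  | .and a b => .and (a.subst σ) (b.subst σ)
  | .or a b => .or (a.subst σ) (b.subst σ)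
  | .imp a b => .imp (a.subst σ) (b.subst σ)

/-- The atoms occurring in a formula. -/
def Formula.atoms : Formula → List ℕ
  | .atom p => [p]
  | .neg a => a.atoms
  | .and a b => a.atoms ++ b.atoms
  | .or a b => a.atoms ++ b.atoms
  | .imp a b => a.atoms ++ b.atoms

/-- Conjunction of a nonempty list of formulas. -/
def conjList (f : Formula) : List Formula → Formula
  | [] => f
  | g :: gs => .and f (conjList g gs)

/-- The conjunction (¬¬p → p) ∧ … of stability instances for the atoms
    `p :: ps`. -/
def stabConj (p : ℕ) (ps : List ℕ) : Formula :=
  conjList (stab p) (ps.map stab)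

/-!
Under rule (E) the play is forced.  O must attack `¬p ∨ ¬¬p` with `?`, and P defends with `¬¬p`;
O must attack that by asserting `¬p`, and P attacks `¬p` by asserting `p`, which D10* permits
because O has just asserted `¬p`.  Now O can neither attack the atom `p` nor defend `¬p`, so P
wins.  Every move of this play answers the immediately preceding one, which alone yields D11, D12,
D13 and (E); and legality is prefix-closed, so the intermediate positions are legal too.
-/
namespace Dialogue

variable {d : Dialogue} {m a : Move} {n : ℕ}

@[simp] theorem stmtAt_zero (d : Dialogue) : d.stmtAt 0 = some (.form d.initial) := rfl

@[simp] theorem stmtAt_succ (d : Dialogue) (n : ℕ) :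
    d.stmtAt (n + 1) = d.moves[n]?.map Move.statement := rfl

@[simp] theorem moveAt_zero (d : Dialogue) : d.moveAt 0 = none := rfl

@[simp] theorem moveAt_succ (d : Dialogue) (n : ℕ) : d.moveAt (n + 1) = d.moves[n]? := rfl

theorem le_length_of_stmtAt_eq_some {s : Statement} (h : d.stmtAt n = some s) :
    n ≤ d.moves.length := by
  cases n with
  | zero => exact Nat.zero_le _
  | succ n =>
    obtain ⟨m, hm, -⟩ := Option.map_eq_some_iff.mp h
    exact (List.getElem?_eq_some_iff.mp hm).1

theorem stmtAt_extend_of_le (h : n ≤ d.moves.length) : (d.extend m).stmtAt n = d.stmtAt n := by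
  cases n with
  | zero => rfl
  | succ n => simp [extend, List.getElem?_append_left (show n < d.moves.length by omega)]

theorem moveAt_extend_of_le (h : n ≤ d.moves.length) : (d.extend m).moveAt n = d.moveAt n := by
  cases n with
  | zero => rfl
  | succ n => simp [extend, List.getElem?_append_left (show n < d.moves.length by omega)]

theorem moveAt_extend_nextPos : (d.extend m).moveAt (nextPos d) = some m := by
  simp [nextPos, extend]

theorem le_length_of_moveAt_eq_some (h : d.moveAt n = some a) : n ≤ d.moves.length := by
  cases n with
  | zero => simp at h
  | succ n => exact (List.getElem?_eq_some_iff.mp h).1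

theorem moveAt_extend_of_eq_some (h : d.moveAt n = some a) : (d.extend m).moveAt n = some a := by
  rw [moveAt_extend_of_le (le_length_of_moveAt_eq_some h), h]

end Dialogue

open Dialogue

variable {d : Dialogue} {m a : Move} {n r k : ℕ}

theorem isDefenseOf_extend_iff (hn : n ≤ d.moves.length) :
    IsDefenseOf (d.extend m) n r ↔ IsDefenseOf d n r := by
  simp only [IsDefenseOf, moveAt_extend_of_le hn]

theorem isAttackPos_extend_iff (hn : n ≤ d.moves.length) :
    IsAttackPos (d.extend m) n ↔ IsAttackPos d n := by
  simp only [IsAttackPos, moveAt_extend_of_le hn]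

theorem IsDefenseOf.extend (h : IsDefenseOf d n r) : IsDefenseOf (d.extend m) n r :=
  let ⟨a, ha, hA, hr⟩ := h
  ⟨a, moveAt_extend_of_eq_some ha, hA, hr⟩

theorem IsAttackOn.extend (h : IsAttackOn d n r) : IsAttackOn (d.extend m) n r :=
  let ⟨a, ha, hA, hr⟩ := h
  ⟨a, moveAt_extend_of_eq_some ha, hA, hr⟩

theorem openAt_extend_iff (hr : r ≤ d.moves.length) (hk : k ≤ d.moves.length + 1) :
    OpenAt (d.extend m) r k ↔ OpenAt d r k := by
  unfold OpenAt
  rw [isAttackPos_extend_iff hr]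
  exact and_congr_right fun _ => not_congr <| exists_congr fun j =>
    and_congr_right fun hj => isDefenseOf_extend_iff (by omega)

theorem ParticleOK.ref_lt (h : ParticleOK d) (ha : d.moveAt n = some a) : a.ref < n := by
  cases n with
  | zero => simp at ha
  | succ n => exact (h n a ha).1

theorem ParticleOK.isAttackPos_of_isDefenseOf (h : ParticleOK d) (hd : IsDefenseOf d n r) :
    IsAttackPos d r := by
  obtain ⟨a, ha, hA, rfl⟩ := hd
  cases n with
  | zero => simp at ha
  | succ n =>
    obtain ⟨b, -, hb, hbA, -⟩ := (h n a ha).2.2.2 hA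
    exact ⟨b, hb, hbA⟩

theorem ParticleOK.of_extend (h : ParticleOK (d.extend m)) : ParticleOK d := by
  intro i b hb
  have hi : i < d.moves.length := (List.getElem?_eq_some_iff.mp hb).1
  obtain ⟨hlt, hpar, hatt, hdef⟩ :=
    h i b (by rw [Dialogue.extend, List.getElem?_append_left hi, hb])
  refine ⟨hlt, hpar, fun hA => ?_, fun hA => ?_⟩
  · rw [← stmtAt_extend_of_le (m := m) (by omega)]
    exact hatt hA
  · obtain ⟨c, χ, hc, hcA, hχ, hD⟩ := hdef hA
    have hcb := h.ref_lt hc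
    rw [moveAt_extend_of_le (by omega)] at hc
    rw [stmtAt_extend_of_le (by omega)] at hχ
    exact ⟨c, χ, hc, hcA, hχ, hD⟩

theorem D10star.of_extend (h : D10star (d.extend m)) : D10star d := by
  intro n q hn hs
  have hle := le_length_of_stmtAt_eq_some hs
  obtain ⟨j, hj, hjO, hj'⟩ := h n q hn (by rwa [stmtAt_extend_of_le hle])
  exact ⟨j, hj, hjO, by rwa [stmtAt_extend_of_le (by omega)] at hj'⟩

theorem D11.of_extend (hP : ParticleOK (d.extend m)) (h : D11 (d.extend m)) : D11 d := by
  intro n r hd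
  obtain ⟨b, hb, hbD, rfl⟩ := hd
  have hn := le_length_of_moveAt_eq_some hb
  have hr := hP.ref_lt (moveAt_extend_of_eq_some hb)
  obtain ⟨hopen, hlast⟩ := h n b.ref (IsDefenseOf.extend ⟨b, hb, hbD, rfl⟩)
  refine ⟨(openAt_extend_iff (by omega) (by omega)).1 hopen, ?_⟩
  rintro ⟨r', hr', hr'n, hpar, hr'open⟩
  exact hlast ⟨r', hr', hr'n, hpar, (openAt_extend_iff (by omega) (by omega)).2 hr'open⟩

theorem D12.of_extend (h : D12 (d.extend m)) : D12 d :=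
  fun n₁ n₂ r h₁ h₂ => h n₁ n₂ r h₁.extend h₂.extend

theorem D13.of_extend (h : D13 (d.extend m)) : D13 d :=
  fun n₁ n₂ r hr h₁ h₂ => h n₁ n₂ r hr h₁.extend h₂.extend

theorem ERule.of_extend (h : ERule (d.extend m)) : ERule d :=
  fun n b hn hb => h n b hn (moveAt_extend_of_eq_some hb)

theorem Legal.of_extend (h : Legal rulesetEstar (d.extend m)) : Legal rulesetEstar d := by
  obtain ⟨hP, h10, h11, h12, h13, hE⟩ := h
  exact ⟨hP.of_extend, h10.of_extend, h11.of_extend hP, h12.of_extend, h13.of_extend,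
    hE.of_extend⟩

theorem Legal.of_append {φ : Formula} {l₁ l₂ : List Move}
    (h : Legal rulesetEstar ⟨φ, l₁ ++ l₂⟩) : Legal rulesetEstar ⟨φ, l₁⟩ := by
  induction l₂ generalizing l₁ with
  | nil => simpa using h
  | cons b l₂ ih => exact Legal.of_extend (d := ⟨φ, l₁⟩) (m := b) (ih (by simpa using h))

theorem Legal.of_take {φ : Formula} {l : List Move} (k : ℕ) (h : Legal rulesetEstar ⟨φ, l⟩) :
    Legal rulesetEstar ⟨φ, l.take k⟩ := by
  rw [← List.take_append_drop k l] at h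
  exact h.of_append

def RepliesToPrevious (d : Dialogue) : Prop :=
  ∀ i (b : Move), d.moves[i]? = some b → b.ref = i

namespace RepliesToPrevious

theorem ref_eq (h : RepliesToPrevious d) (ha : d.moveAt n = some a) : a.ref + 1 = n := by
  cases n with
  | zero => simp at ha
  | succ n => rw [h n a ha]

theorem eq_of_ref_eq {n₁ n₂ : ℕ} {a₁ a₂ : Move} (h : RepliesToPrevious d)
    (h₁ : d.moveAt n₁ = some a₁) (h₂ : d.moveAt n₂ = some a₂) (hr : a₁.ref = a₂.ref) :
    n₁ = n₂ := by
  rw [← h.ref_eq h₁, ← h.ref_eq h₂, hr]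

theorem eRule (h : RepliesToPrevious d) : ERule d :=
  fun _ _ _ ha => by rw [← h.ref_eq ha, Nat.add_sub_cancel]

theorem d12 (h : RepliesToPrevious d) : D12 d := by
  rintro n₁ n₂ r ⟨a₁, h₁, -, rfl⟩ ⟨a₂, h₂, -, hr⟩
  exact h.eq_of_ref_eq h₁ h₂ hr.symm

theorem d13 (h : RepliesToPrevious d) : D13 d := by
  rintro n₁ n₂ r - ⟨a₁, h₁, -, rfl⟩ ⟨a₂, h₂, -, hr⟩
  exact h.eq_of_ref_eq h₁ h₂ hr.symm

theorem d11 (h : RepliesToPrevious d) (hP : ParticleOK d) : D11 d := by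
  intro n r hd
  have hattack := hP.isAttackPos_of_isDefenseOf hd
  obtain ⟨a, ha, -, rfl⟩ := hd
  have hn := h.ref_eq ha
  refine ⟨⟨hattack, ?_⟩, ?_⟩
  · rintro ⟨j, hj, b, hb, -, hbr⟩
    have := h.eq_of_ref_eq hb ha hbr
    omega
  · rintro ⟨r', h₁, h₂, -⟩
    omega

theorem legal (h : RepliesToPrevious d) (hP : ParticleOK d) (h10 : D10star d) :
    Legal rulesetEstar d :=
  ⟨hP, h10, h.d11 hP, h.d12, h.d13, h.eRule⟩

end RepliesToPrevious

theorem not_attacks_atom {s : Statement} {q : ℕ} : ¬Attacks s (.atom q) := nofun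

theorem not_defends_neg {χ : Formula} {s t : Statement} : ¬Defends (.neg χ) s t := nofun

theorem pTurn_extend_iff : PTurn (d.extend m) ↔ ¬PTurn d := by
  simp only [PTurn, nextPos, Dialogue.extend, List.length_append, List.length_singleton]
  omega

theorem ref_eq_of_legalExt (hm : LegalExt rulesetEstar d m) (hturn : ¬PTurn d) :
    m.ref = d.moves.length := by
  have hodd : nextPos d % 2 = 1 := by unfold PTurn at hturn; omega
  simpa [nextPos] using hm.2.2.2.2.2 _ _ hodd moveAt_extend_nextPos

theorem moveOK_of_legalExt {S : Ruleset} (hm : LegalExt S d m) :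
    MoveOK (d.extend m) (nextPos d) m :=
  hm.1 d.moves.length m (by simp [Dialogue.extend])

theorem attacks_of_legalExt {ψ : Formula} (hm : LegalExt rulesetEstar d m) (hturn : ¬PTurn d)
    (hψ : d.stmtAt d.moves.length = some (.form ψ))
    (hlast : ∀ a, d.moveAt d.moves.length = some a → a.isAttack = false) :
    m.ref = d.moves.length ∧ m.isAttack = true ∧ Attacks m.statement ψ := by
  have hr := ref_eq_of_legalExt hm hturn
  obtain ⟨-, -, hatt, hdef⟩ := moveOK_of_legalExt hm
  rw [hr] at hatt hdef
  cases hA : m.isAttack with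
  | false =>
    obtain ⟨a, -, ha, haA, -⟩ := hdef hA
    rw [moveAt_extend_of_le le_rfl] at ha
    simp [hlast a ha] at haA
  | true =>
    obtain ⟨ψ', hψ', hat⟩ := hatt hA
    rw [stmtAt_extend_of_le le_rfl, hψ] at hψ'
    cases hψ'
    exact ⟨hr, rfl, hat⟩

theorem not_legalExt_of_attack_on_neg {q : ℕ} {χ : Formula} (hturn : ¬PTurn d)
    (hq : d.stmtAt d.moves.length = some (.form (.atom q)))
    (ha : d.moveAt d.moves.length = some a) (hχ : d.stmtAt a.ref = some (.form (.neg χ))) :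
    ¬LegalExt rulesetEstar d m := by
  intro hm
  have hr := ref_eq_of_legalExt hm hturn
  obtain ⟨-, -, hatt, hdef⟩ := moveOK_of_legalExt hm
  rw [hr] at hatt hdef
  cases hA : m.isAttack with
  | false =>
    obtain ⟨b, χ', hb, -, hχ', hD⟩ := hdef hA
    rw [moveAt_extend_of_le le_rfl, ha] at hb
    cases hb
    rw [stmtAt_extend_of_le (hm.1.ref_lt (moveAt_extend_of_eq_some ha)).le, hχ] at hχ'
    cases hχ'
    exact not_defends_neg hD
  | true =>
    obtain ⟨ψ, hψ, hat⟩ := hatt hA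
    rw [stmtAt_extend_of_le le_rfl, hq] at hψ
    cases hψ
    exact not_attacks_atom hat

def wem (p : ℕ) : Formula := .or (.neg (.atom p)) (.neg (.neg (.atom p)))

def wemMoves (p : ℕ) : List Move :=
  [⟨.qmark, true, 0⟩, ⟨.form (.neg (.neg (.atom p))), false, 1⟩,
    ⟨.form (.neg (.atom p)), true, 2⟩, ⟨.form (.atom p), true, 3⟩]

def wemDialogue (p k : ℕ) : Dialogue := ⟨wem p, (wemMoves p).take k⟩

theorem legal_wemMoves (p : ℕ) : Legal rulesetEstar ⟨wem p, wemMoves p⟩ := by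
  refine RepliesToPrevious.legal ?_ ?_ ?_
  · intro i b hb
    have hi : i < 4 := (List.getElem?_eq_some_iff.mp hb).1
    interval_cases i <;>
      simp only [wemMoves, List.getElem?_cons_succ, List.getElem?_cons_zero,
        Option.some.injEq] at hb <;>
      rw [← hb]
  · intro i b hb
    have hi : i < 4 := (List.getElem?_eq_some_iff.mp hb).1
    interval_cases i <;>
      simp only [wemMoves, List.getElem?_cons_succ, List.getElem?_cons_zero,
        Option.some.injEq] at hb <;>
      subst hb <;>
      simp [MoveOK, wemMoves, wem, Attacks.qmark, Attacks.neg, Defends.orR]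
  · intro n q hn hq
    have hle : n ≤ 4 := le_length_of_stmtAt_eq_some hq
    interval_cases n <;>
      simp only [wemMoves, wem, stmtAt_zero, stmtAt_succ, List.getElem?_cons_succ,
        List.getElem?_cons_zero, Option.map_some, Option.some.injEq, Statement.form.injEq,
        Formula.atom.injEq, reduceCtorEq] at hn hq
    subst hq
    exact ⟨3, by norm_num, rfl, Or.inr rfl⟩

theorem legal_wemDialogue (p k : ℕ) : Legal rulesetEstar (wemDialogue p k) :=
  (legal_wemMoves p).of_take k

theorem pWinning_wemDialogue_four (p : ℕ) : PWinning rulesetEstar (wemDialogue p 4) := by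
  have hturn : ¬PTurn (wemDialogue p 4) := by simp [PTurn, nextPos, wemDialogue, wemMoves]
  refine .oMoves _ hturn fun m hm => absurd hm ?_
  exact not_legalExt_of_attack_on_neg (a := ⟨.form (.atom p), true, 3⟩) (χ := .atom p) hturn
    rfl rfl rfl

theorem pWinning_wemDialogue_two (p : ℕ) : PWinning rulesetEstar (wemDialogue p 2) := by
  have hturn : ¬PTurn (wemDialogue p 2) := by simp [PTurn, nextPos, wemDialogue, wemMoves]
  refine .oMoves _ hturn fun m hm => ?_
  obtain ⟨hr, hA, hat⟩ := attacks_of_legalExt (ψ := .neg (.neg (.atom p))) hm hturn rfl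
    (by rintro a ⟨⟩; rfl)
  obtain ⟨s, b, r⟩ := m
  dsimp only at hr hA hat
  subst hr hA
  cases hat
  exact .pMove _ ⟨.form (.atom p), true, 3⟩ (pTurn_extend_iff.2 hturn) (legal_wemDialogue p 4)
    trivial (pWinning_wemDialogue_four p)

theorem pWinning_wemDialogue_zero (p : ℕ) : PWinning rulesetEstar (wemDialogue p 0) := by
  have hturn : ¬PTurn (wemDialogue p 0) := by simp [PTurn, nextPos, wemDialogue, wemMoves]
  refine .oMoves _ hturn fun m hm => ?_
  obtain ⟨hr, hA, hat⟩ := attacks_of_legalExt (ψ := wem p) hm hturn rfl (by rintro a ⟨⟩)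
  obtain ⟨s, b, r⟩ := m
  dsimp only at hr hA hat
  subst hr hA
  cases hat
  exact .pMove _ ⟨.form (.neg (.neg (.atom p))), false, 1⟩ (pTurn_extend_iff.2 hturn)
    (legal_wemDialogue p 2) trivial (pWinning_wemDialogue_two p)

/-- For every atom p, weak excluded middle ¬p ∨ ¬¬p is E*-valid. -/
theorem wem_Estar_valid (p : ℕ) :
    valid rulesetEstar (.or (.neg (.atom p)) (.neg (.neg (.atom p)))) :=
  ⟨legal_wemDialogue p 0, pWinning_wemDialogue_zero p⟩

end LorenzenDialogues
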